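/- Let G = G₀ ⋉ U be an internal semidirect product with U normal, and let B be a maximal solvable subgroup of G. Then B₀ := B ∩ G₀ is a maximal solvable subgroup of G₀. -/

import Mathlib

/-!
A maximal solvable subgroup `B` contains the solvable normal subgroup `U`, because `B ⊔ U` is
again solvable; hence `B = (B ⊓ G₀) ⊔ U`. If `C ≤ G₀` is solvable and contains `B ⊓ G₀`, then
`C ⊔ U` is solvable and contains `B`, so maximality gives `B = C ⊔ U ≥ C`.
-/

namespace Subgroup

variable {G : Type*} [Group G]

/-- `(H ⊔ N) ⧸ N ≅ H ⧸ (H ⊓ N)` by the second isomorphism theorem. -/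
theorem isSolvable_sup_of_normal (H N : Subgroup G) [N.Normal] [Group.IsSolvable H]
    [Group.IsSolvable N] : Group.IsSolvable ↥(H ⊔ N) := by
  let e := QuotientGroup.quotientInfEquivProdNormalQuotient H N
  have : Group.IsSolvable (↥(H ⊔ N) ⧸ N.subgroupOf (H ⊔ N)) :=
    Group.isSolvable_of_surjective (f := e.toMonoidHom) e.surjective
  refine Group.isSolvable_of_ker_le_range (inclusion (le_sup_right : N ≤ H ⊔ N))
    (QuotientGroup.mk' (N.subgroupOf (H ⊔ N))) fun x hx => ?_
  rw [QuotientGroup.ker_mk'] at hx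
  exact ⟨⟨x, hx⟩, rfl⟩

theorem le_of_normal_of_maximal_solvable {B N : Subgroup G} [N.Normal] [Group.IsSolvable B]
    [Group.IsSolvable N] (hmax : ∀ C : Subgroup G, Group.IsSolvable C → B ≤ C → B = C) :
    N ≤ B :=
  (hmax _ (isSolvable_sup_of_normal B N) le_sup_left) ▸ le_sup_right

theorem le_inf_sup_of_forall_eq_mul {K U B : Subgroup G}
    (hprod : ∀ g : G, ∃ k ∈ K, ∃ u ∈ U, g = k * u) (hUB : U ≤ B) : B ≤ B ⊓ K ⊔ U := by
  intro b hb
  obtain ⟨k, hk, u, hu, rfl⟩ := hprod b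
  have hkB : k ∈ B := by simpa using B.mul_mem hb (B.inv_mem (hUB hu))
  exact mul_mem_sup ⟨hkB, hk⟩ hu

end Subgroup

open Subgroup in
theorem inf_reductive_part_of_maximal_solvable_is_maximal_solvable_general {G : Type*} [Group G]
    (G₀ U : Subgroup G) [U.Normal] [Group.IsSolvable ↥U]
    (hprod : ∀ g : G, ∃ g₀ ∈ G₀, ∃ u ∈ U, g = g₀ * u)
    (B : Subgroup G) [Group.IsSolvable ↥B]
    (hmax : ∀ C : Subgroup G, Group.IsSolvable ↥C → B ≤ C → B = C) :
    Group.IsSolvable ↥(B ⊓ G₀) ∧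
      ∀ C : Subgroup G, C ≤ G₀ → Group.IsSolvable ↥C → B ⊓ G₀ ≤ C → B ⊓ G₀ = C := by
  refine ⟨Group.isSolvable_of_isSolvable_injective (inclusion_injective inf_le_left),
    fun C hCG₀ hC hBC => ?_⟩
  have hUB : U ≤ B := le_of_normal_of_maximal_solvable hmax
  have hB : B = C ⊔ U := hmax _ (isSolvable_sup_of_normal C U)
    ((le_inf_sup_of_forall_eq_mul hprod hUB).trans (sup_le_sup_right hBC U))
  exact hBC.antisymm (le_inf (hB ▸ le_sup_left) hCG₀)

/-- Let `G = G₀ ⋉ U` be an internal semidirect product with `U` a solvable normal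
subgroup, and let `B` be a maximal solvable subgroup of `G`. Then `B₀ := B ∩ G₀` is a
maximal solvable subgroup of `G₀` (i.e. solvable, and not properly contained in any
solvable subgroup of `G₀`). -/
theorem inf_reductive_part_of_maximal_solvable_is_maximal_solvable {G : Type*} [Group G]
    (G₀ U : Subgroup G) [U.Normal] [Group.IsSolvable ↥U]
    (hprod : ∀ g : G, ∃ g₀ ∈ G₀, ∃ u ∈ U, g = g₀ * u)
    (hint : G₀ ⊓ U = ⊥)
    (B : Subgroup G) [Group.IsSolvable ↥B]
    (hmax : ∀ C : Subgroup G, Group.IsSolvable ↥C → B ≤ C → B = C) :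
    Group.IsSolvable ↥(B ⊓ G₀) ∧
      ∀ C : Subgroup G, C ≤ G₀ → Group.IsSolvable ↥C → B ⊓ G₀ ≤ C → B ⊓ G₀ = C :=
  inf_reductive_part_of_maximal_solvable_is_maximal_solvable_general G₀ U hprod B hmax
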